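/- Let ρ(z,w) = (1−|w|²)^p · exp(−(2|z|² + z²w̄ + z̄²w)/(2(1−|w|²))) for z ∈ ℂ, |w| < 1, p ∈ ℝ. Then ρ satisfies the partial differential equation w·∂ρ/∂z − ∂ρ/∂z̄ = z·ρ. -/

import Mathlib

open ComplexConjugate

/-- Wirtinger derivative `∂/∂z = (1/2)(∂/∂x − i ∂/∂y)` of `f : ℂ → ℂ`,
viewed as a real-differentiable map. -/
noncomputable def Dz (f : ℂ → ℂ) (z : ℂ) : ℂ :=
  (1 / 2) * (fderiv ℝ f z 1 - Complex.I * fderiv ℝ f z Complex.I)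

/-- Wirtinger derivative `∂/∂z̄ = (1/2)(∂/∂x + i ∂/∂y)`. -/
noncomputable def Dzbar (f : ℂ → ℂ) (z : ℂ) : ℂ :=
  (1 / 2) * (fderiv ℝ f z 1 + Complex.I * fderiv ℝ f z Complex.I)

/-- `ρ(z,w) = (1−|w|²)^p exp(−(2|z|² + z²w̄ + z̄²w)/(2(1−|w|²)))`
(the quantity `z²w̄ + z̄²w` is real, so we take its real part). -/
noncomputable def rho (p : ℝ) (z w : ℂ) : ℝ :=
  (1 - ‖w‖ ^ 2) ^ p *
    Real.exp (-((2 * ‖z‖ ^ 2 + (z ^ 2 * conj w + (conj z) ^ 2 * w).re) /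
      (2 * (1 - ‖w‖ ^ 2))))

/-! On each slice `w = const`, `ρ = K · exp(c · E)` with `c = -1/(2(1-|w|²))` and
`E(z) = 2 z z̄ + z² w̄ + z̄² w`. Since `∂E/∂z = 2z̄ + 2z w̄` and `∂E/∂z̄ = 2z + 2z̄ w`, the chain rule gives
`w ∂ρ/∂z - ∂ρ/∂z̄ = c ρ (w ∂E/∂z - ∂E/∂z̄) = c ρ · (-2z(1-|w|²)) = z ρ`. -/

open Complex

noncomputable def wirtingerCLM (α β : ℂ) : ℂ →L[ℝ] ℂ :=
  α • ContinuousLinearMap.id ℝ ℂ + β • conjCLE.toContinuousLinearMap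

@[simp]
lemma wirtingerCLM_apply (α β v : ℂ) : wirtingerCLM α β v = α * v + β * conj v := rfl

section Wirtinger

variable {f : ℂ → ℂ} {z α β : ℂ}

lemma Dz_eq_of_hasFDerivAt (hf : HasFDerivAt f (wirtingerCLM α β) z) : Dz f z = α := by
  simp only [Dz, hf.fderiv, wirtingerCLM_apply, map_one, conj_I]
  linear_combination (-(1 : ℂ) / 2 * α + 1 / 2 * β) * I_sq

lemma Dzbar_eq_of_hasFDerivAt (hf : HasFDerivAt f (wirtingerCLM α β) z) : Dzbar f z = β := by
  simp only [Dzbar, hf.fderiv, wirtingerCLM_apply, map_one, conj_I]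
  linear_combination (1 / 2 * α - 1 / 2 * β) * I_sq

lemma HasDerivAt.comp_hasFDerivAt_wirtingerCLM {g : ℂ → ℂ} {g' : ℂ} (hg : HasDerivAt g g' (f z))
    (hf : HasFDerivAt f (wirtingerCLM α β) z) :
    HasFDerivAt (g ∘ f) (wirtingerCLM (g' * α) (g' * β)) z := by
  refine (hg.comp_hasFDerivAt z hf).congr_fderiv (ContinuousLinearMap.ext fun v => ?_)
  simp only [FunLike.coe_smul, Pi.smul_apply, wirtingerCLM_apply, smul_eq_mul]
  ring

end Wirtinger

def gaussExponent (w z : ℂ) : ℂ := 2 * z * conj z + z ^ 2 * conj w + conj z ^ 2 * w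

lemma hasFDerivAt_gaussExponent (w z : ℂ) :
    HasFDerivAt (gaussExponent w)
      (wirtingerCLM (2 * conj z + 2 * z * conj w) (2 * z + 2 * conj z * w)) z := by
  have hid : HasFDerivAt (fun u : ℂ => u) (wirtingerCLM 1 0) z :=
    (hasFDerivAt_id z).congr_fderiv (ContinuousLinearMap.ext fun v => by simp)
  have hconj : HasFDerivAt (fun u : ℂ => conj u) (wirtingerCLM 0 1) z :=
    conjCLE.hasFDerivAt.congr_fderiv (ContinuousLinearMap.ext fun v => by simp)
  refine ((((hid.const_mul 2).mul hconj).add ((hid.pow 2).mul_const (conj w))).add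
    ((hconj.pow 2).mul_const w)).congr_fderiv (ContinuousLinearMap.ext fun v => ?_)
  simp only [Nat.add_one_sub_one, pow_one, nsmul_eq_mul, Nat.cast_ofNat, add_apply, smul_apply,
    wirtingerCLM_apply, zero_mul, one_mul, zero_add, smul_eq_mul, add_zero]
  ring

lemma ofReal_rho (p : ℝ) (z w : ℂ) :
    ((rho p z w : ℝ) : ℂ) = ((1 - ‖w‖ ^ 2) ^ p : ℝ) *
      cexp (((-(2 * (1 - ‖w‖ ^ 2))⁻¹ : ℝ) : ℂ) * gaussExponent w z) := by
  have hre : (((z ^ 2 * conj w + conj z ^ 2 * w).re : ℝ) : ℂ) = z ^ 2 * conj w + conj z ^ 2 * w :=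
    conj_eq_iff_re.mp (by simp only [map_add, map_mul, map_pow, conj_conj]; ring)
  rw [rho]
  push_cast
  rw [hre, ← mul_conj', ← mul_conj', gaussExponent]
  ring_nf

theorem stmt_7 (p : ℝ) (z w : ℂ) (hw : ‖w‖ < 1) :
    w * Dz (fun z' => ((rho p z' w : ℝ) : ℂ)) z
      - Dzbar (fun z' => ((rho p z' w : ℝ) : ℂ)) z = z * ((rho p z w : ℝ) : ℂ) := by
  obtain ⟨K, c, hρ, hc⟩ : ∃ K c : ℂ, (∀ z', (rho p z' w : ℂ) = K * cexp (c * gaussExponent w z'))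
      ∧ c * (2 * (1 - w * conj w)) = -1 := by
    refine ⟨_, _, fun z' => ofReal_rho p z' w, ?_⟩
    rw [mul_conj']
    have h0 : (1 - ‖w‖ ^ 2 : ℂ) ≠ 0 := by
      exact_mod_cast (ne_of_gt (by nlinarith [norm_nonneg w]) : (1 - ‖w‖ ^ 2 : ℝ) ≠ 0)
    push_cast
    field_simp
  have hg : HasDerivAt (fun u => K * cexp (c * u)) (K * cexp (c * gaussExponent w z) * c)
      (gaussExponent w z) := by
    simpa [mul_assoc] using ((hasDerivAt_id' (gaussExponent w z)).const_mul c).cexp.const_mul K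
  have hd := hg.comp_hasFDerivAt_wirtingerCLM (hasFDerivAt_gaussExponent w z)
  rw [show (fun z' => (rho p z' w : ℂ)) = (fun u => K * cexp (c * u)) ∘ gaussExponent w from
    funext hρ, Dz_eq_of_hasFDerivAt hd, Dzbar_eq_of_hasFDerivAt hd, hρ]
  linear_combination (-z * K * cexp (c * gaussExponent w z)) * hc
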